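/- Certified robustness via integer randomized smoothing (half-space form): fix σ > 0, d ∈ ℕ, a finite label set C, a base classifier f : ℤ^d → C, x, δ ∈ ℤ^d, and a label c_A ∈ C. Let p_X, p_Y be the pmfs on ℤ^d of the product discrete Gaussians centered at x and at x+δ respectively. Suppose there exist real thresholds t_A, t_B such that, with half-spaces S_A = {z ∈ ℤ^d : ⟨z−x,δ⟩ ≤ t_A} and S_B = {z ∈ ℤ^d : ⟨z−x,δ⟩ ≥ t_B}: (i) ∑_{z : f(z)=c_A} p_X(z) ≥ ∑_{z∈S_A} p_X(z); (ii) for every c ≠ c_A, ∑_{z : f(z)=c} p_X(z) ≤ ∑_{z∈S_B} p_X(z); and (iii) ∑_{z∈S_A} p_Y(z) > ∑_{z∈S_B} p_Y(z). Then for every c ≠ c_A, ∑_{z : f(z)=c_A} p_Y(z) > ∑_{z : f(z)=c} p_Y(z); that is, the smoothed classifier g(x') = argmax_{c∈C} ℙ_{n∼N_ℤ(0,σ²I_d)}[f(x'+n)=c] satisfies g(x+δ) = c_A. -/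

import Mathlib

open scoped BigOperators

/-- Discrete Gaussian pmf on ℤ with location `μ` and scale `σ`. -/
noncomputable def dgauss (σ : ℝ) (μ : ℤ) (z : ℤ) : ℝ :=
  Real.exp (-((z : ℝ) - (μ : ℝ)) ^ 2 / (2 * σ ^ 2)) /
    ∑' h : ℤ, Real.exp (-((h : ℝ) - (μ : ℝ)) ^ 2 / (2 * σ ^ 2))

/-- Product discrete Gaussian pmf on `ℤ^d` centered at `x`. -/
noncomputable def dgaussProd (σ : ℝ) (d : ℕ) (x z : Fin d → ℤ) : ℝ :=
  ∏ i, dgauss σ (x i) (z i)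

/-- Standard inner product on `ℝ^d` of (casts of) integer vectors. -/
noncomputable def iprod (d : ℕ) (a b : Fin d → ℤ) : ℝ :=
  ∑ i, (a i : ℝ) * (b i : ℝ)

/-- Squared ℓ₂ norm of (the cast of) an integer vector. -/
noncomputable def nsq (d : ℕ) (a : Fin d → ℤ) : ℝ :=
  ∑ i, ((a i : ℝ)) ^ 2

/-!
The likelihood ratio of the two product discrete Gaussians is
`p_{x+δ}(z) / p_x(z) = exp ((2 ⟨z - x, δ⟩ - ‖δ‖²) / (2σ²))`, a monotone function of `⟨z - x, δ⟩`
(the normalising constants agree because `ℤ` is invariant under translation by `δ i`).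
By the Neyman–Pearson argument, the sublevel set `S_A` has the least `p_{x+δ}`-mass among sets of
at least its `p_x`-mass, and the superlevel set `S_B` the greatest among sets of at most its
`p_x`-mass. Hence `P_Y(f = c_A) ≥ P_Y(S_A) > P_Y(S_B) ≥ P_Y(f = c)`.
-/

open Real

section NeymanPearson

variable {V : Type*} {p q : V → ℝ}

theorem Summable.tsum_subtype_eq_inter_add_diff {f : V → ℝ} (hf : Summable f) (A B : Set V) :
    ∑' z : A, f z = ∑' z : ↑(A ∩ B), f z + ∑' z : ↑(A \ B), f z := by
  conv_lhs => rw [← Set.inter_union_sdiff A B]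
  exact Summable.tsum_union_disjoint (f := f) Set.disjoint_sdiff_inter.symm (hf.subtype _)
    (hf.subtype _)

theorem tsum_subtype_le_of_ratio_bounds (hps : Summable p) (hqs : Summable q) {S E : Set V}
    {ρ : ℝ} (hρ : 0 ≤ ρ) (hin : ∀ z ∈ S \ E, q z ≤ ρ * p z) (hout : ∀ z ∈ E \ S, ρ * p z ≤ q z)
    (hp : ∑' z : S, p z ≤ ∑' z : E, p z) : ∑' z : S, q z ≤ ∑' z : E, q z := by
  have hdiff : ∑' z : ↑(S \ E), p z ≤ ∑' z : ↑(E \ S), p z := by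
    have hS := hps.tsum_subtype_eq_inter_add_diff S E
    have hE := hps.tsum_subtype_eq_inter_add_diff E S
    rw [Set.inter_comm] at hE
    linarith
  calc ∑' z : S, q z = ∑' z : ↑(S ∩ E), q z + ∑' z : ↑(S \ E), q z :=
        hqs.tsum_subtype_eq_inter_add_diff S E
    _ ≤ ∑' z : ↑(S ∩ E), q z + ρ * ∑' z : ↑(S \ E), p z := by
        rw [← tsum_mul_left]
        exact add_le_add le_rfl ((hqs.subtype _).tsum_le_tsum (fun z : ↑(S \ E) => hin z z.2)
          ((hps.subtype _).mul_left ρ))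
    _ ≤ ∑' z : ↑(S ∩ E), q z + ρ * ∑' z : ↑(E \ S), p z := by gcongr
    _ ≤ ∑' z : ↑(S ∩ E), q z + ∑' z : ↑(E \ S), q z := by
        rw [← tsum_mul_left]
        exact add_le_add le_rfl (((hps.subtype _).mul_left ρ).tsum_le_tsum
          (fun z : ↑(E \ S) => hout z z.2) (hqs.subtype _))
    _ = ∑' z : E, q z := by rw [Set.inter_comm, ← hqs.tsum_subtype_eq_inter_add_diff E S]

variable {T : V → ℝ} {φ : ℝ → ℝ}

theorem tsum_sublevel_le_of_monotone_ratio (hp0 : ∀ z, 0 ≤ p z) (hps : Summable p)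
    (hqs : Summable q) (hφ : Monotone φ) (hq : ∀ z, q z = p z * φ (T z)) {t : ℝ}
    (hφt : 0 ≤ φ t) {E : Set V} (h : ∑' z : {z | T z ≤ t}, p z ≤ ∑' z : E, p z) :
    ∑' z : {z | T z ≤ t}, q z ≤ ∑' z : E, q z := by
  refine tsum_subtype_le_of_ratio_bounds hps hqs hφt (fun z hz => ?_) (fun z hz => ?_) h
  · rw [hq, mul_comm (φ t)]
    exact mul_le_mul_of_nonneg_left (hφ hz.1) (hp0 z)
  · rw [hq, mul_comm (φ t)]
    exact mul_le_mul_of_nonneg_left (hφ (not_le.mp hz.2).le) (hp0 z)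

theorem tsum_le_superlevel_of_monotone_ratio (hp0 : ∀ z, 0 ≤ p z) (hps : Summable p)
    (hqs : Summable q) (hφ : Monotone φ) (hq : ∀ z, q z = p z * φ (T z)) {t : ℝ}
    (hφt : 0 ≤ φ t) {E : Set V} (h : ∑' z : E, p z ≤ ∑' z : {z | t ≤ T z}, p z) :
    ∑' z : E, q z ≤ ∑' z : {z | t ≤ T z}, q z := by
  refine tsum_subtype_le_of_ratio_bounds hps hqs hφt (fun z hz => ?_) (fun z hz => ?_) h
  · rw [hq, mul_comm (φ t)]
    exact mul_le_mul_of_nonneg_left (hφ (not_le.mp hz.2).le) (hp0 z)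
  · rw [hq, mul_comm (φ t)]
    exact mul_le_mul_of_nonneg_left (hφ hz.1) (hp0 z)

end NeymanPearson

theorem summable_pi_prod_of_nonneg {ι κ : Type*} [Fintype ι] {g : ι → κ → ℝ}
    (hg0 : ∀ i w, 0 ≤ g i w) (hg : ∀ i, Summable (g i)) :
    Summable fun z : ι → κ => ∏ i, g i (z i) := by
  classical
  refine summable_of_sum_le (c := ∏ i, ∑' w, g i w)
    (fun z => Finset.prod_nonneg fun i _ => hg0 i (z i)) fun u => ?_
  calc ∑ z ∈ u, ∏ i, g i (z i)
      ≤ ∑ z ∈ Fintype.piFinset fun i => u.image (· i), ∏ i, g i (z i) :=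
        Finset.sum_le_sum_of_subset_of_nonneg
          (fun z hz => Fintype.mem_piFinset.mpr fun i => Finset.mem_image_of_mem _ hz)
          fun z _ _ => Finset.prod_nonneg fun i _ => hg0 i (z i)
    _ = ∏ i, ∑ w ∈ u.image (· i), g i w := (Finset.prod_univ_sum _ _).symm
    _ ≤ ∏ i, ∑' w, g i w :=
        Finset.prod_le_prod (fun i _ => Finset.sum_nonneg fun w _ => hg0 i w)
          fun i _ => (hg i).sum_le_tsum _ fun w _ => hg0 i w

theorem summable_exp_neg_sq_div_int {σ : ℝ} (hσ : σ ≠ 0) (μ : ℝ) :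
    Summable fun h : ℤ => exp (-((h : ℝ) - μ) ^ 2 / (2 * σ ^ 2)) := by
  -- `f_int 0 a t n = exp (-π (n + a) ^ 2 * t)` is a Jacobi theta summand.
  refine (HurwitzKernelBounds.summable_f_int 0 (-μ) (t := 1 / (2 * π * σ ^ 2))
    (by positivity)).congr fun h => ?_
  simp only [HurwitzKernelBounds.f_int, pow_zero, one_mul]
  congr 1
  field_simp
  ring

theorem dgauss_nonneg (σ : ℝ) (μ z : ℤ) : 0 ≤ dgauss σ μ z :=
  div_nonneg (exp_pos _).le (tsum_nonneg fun _ => (exp_pos _).le)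

theorem summable_dgauss {σ : ℝ} (hσ : σ ≠ 0) (μ : ℤ) : Summable (dgauss σ μ) :=
  (summable_exp_neg_sq_div_int hσ μ).div_const _

theorem dgauss_add_center (σ : ℝ) (μ a w : ℤ) :
    dgauss σ (μ + a) w =
      dgauss σ μ w * exp ((2 * ((w : ℝ) - μ) * a - (a : ℝ) ^ 2) / (2 * σ ^ 2)) := by
  have hnorm := (Equiv.addRight a).tsum_eq
    fun h : ℤ => exp (-((h : ℝ) - ((μ + a : ℤ) : ℝ)) ^ 2 / (2 * σ ^ 2))
  simp only [Equiv.coe_addRight, Int.cast_add, add_sub_add_right_eq_sub] at hnorm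
  rw [dgauss, dgauss]
  push_cast
  rw [← hnorm, div_mul_eq_mul_div, ← exp_add, ← add_div]
  congr 3
  ring

theorem dgaussProd_nonneg (σ : ℝ) (d : ℕ) (x z : Fin d → ℤ) : 0 ≤ dgaussProd σ d x z :=
  Finset.prod_nonneg fun i _ => dgauss_nonneg σ (x i) (z i)

theorem summable_dgaussProd {σ : ℝ} (hσ : σ ≠ 0) (d : ℕ) (x : Fin d → ℤ) :
    Summable (dgaussProd σ d x) :=
  summable_pi_prod_of_nonneg (fun i => dgauss_nonneg σ (x i)) fun i => summable_dgauss hσ (x i)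

theorem dgaussProd_add_center (σ : ℝ) (d : ℕ) (x δ z : Fin d → ℤ) :
    dgaussProd σ d (x + δ) z =
      dgaussProd σ d x z * exp ((2 * iprod d (z - x) δ - nsq d δ) / (2 * σ ^ 2)) := by
  simp only [dgaussProd, Pi.add_apply, dgauss_add_center, Finset.prod_mul_distrib, ← exp_sum]
  congr 2
  simp only [iprod, nsq, ← Finset.sum_div, Finset.mul_sum, ← Finset.sum_sub_distrib,
    Pi.sub_apply, Int.cast_sub]
  congr 1
  refine Finset.sum_congr rfl fun i _ => ?_
  ring

theorem certified_robustness_intRS_general (σ : ℝ) (hσ : 0 < σ) (d : ℕ)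
    {C : Type*} (f : (Fin d → ℤ) → C)
    (x δ : Fin d → ℤ) (cA : C) (tA tB : ℝ)
    (SA : Set (Fin d → ℤ)) (hSA : SA = {z | iprod d (z - x) δ ≤ tA})
    (SB : Set (Fin d → ℤ)) (hSB : SB = {z | iprod d (z - x) δ ≥ tB})
    (h1 : ∑' z : {z | f z = cA}, dgaussProd σ d x z ≥
          ∑' z : SA, dgaussProd σ d x z)
    (h2 : ∀ c : C, c ≠ cA →
          ∑' z : {z | f z = c}, dgaussProd σ d x z ≤
          ∑' z : SB, dgaussProd σ d x z)
    (h3 : ∑' z : SA, dgaussProd σ d (x + δ) z >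
          ∑' z : SB, dgaussProd σ d (x + δ) z) :
    ∀ c : C, c ≠ cA →
      ∑' z : {z | f z = cA}, dgaussProd σ d (x + δ) z >
      ∑' z : {z | f z = c}, dgaussProd σ d (x + δ) z := by
  intro c hc
  subst hSA hSB
  have hratio : Monotone fun s => exp ((2 * s - nsq d δ) / (2 * σ ^ 2)) := fun s t hst => by
    dsimp only
    gcongr
  have hpX := summable_dgaussProd hσ.ne' d x
  have hpY := summable_dgaussProd hσ.ne' d (x + δ)
  have hSA_le := tsum_sublevel_le_of_monotone_ratio (dgaussProd_nonneg σ d x) hpX hpY hratio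
    (dgaussProd_add_center σ d x δ) (exp_pos _).le h1
  have hle_SB := tsum_le_superlevel_of_monotone_ratio (dgaussProd_nonneg σ d x) hpX hpY hratio
    (dgaussProd_add_center σ d x δ) (exp_pos _).le (h2 c hc)
  exact hle_SB.trans_lt (h3.trans_le hSA_le)

/-- Certified robustness via integer randomized smoothing (half-space form). -/
theorem certified_robustness_intRS (σ : ℝ) (hσ : 0 < σ) (d : ℕ)
    {C : Type*} [Fintype C] (f : (Fin d → ℤ) → C)
    (x δ : Fin d → ℤ) (cA : C) (tA tB : ℝ)
    (SA : Set (Fin d → ℤ)) (hSA : SA = {z | iprod d (z - x) δ ≤ tA})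
    (SB : Set (Fin d → ℤ)) (hSB : SB = {z | iprod d (z - x) δ ≥ tB})
    (h1 : ∑' z : {z | f z = cA}, dgaussProd σ d x z ≥
          ∑' z : SA, dgaussProd σ d x z)
    (h2 : ∀ c : C, c ≠ cA →
          ∑' z : {z | f z = c}, dgaussProd σ d x z ≤
          ∑' z : SB, dgaussProd σ d x z)
    (h3 : ∑' z : SA, dgaussProd σ d (x + δ) z >
          ∑' z : SB, dgaussProd σ d (x + δ) z) :
    ∀ c : C, c ≠ cA →
      ∑' z : {z | f z = cA}, dgaussProd σ d (x + δ) z >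
      ∑' z : {z | f z = c}, dgaussProd σ d (x + δ) z :=
  certified_robustness_intRS_general σ hσ d f x δ cA tA tB SA hSA SB hSB h1 h2 h3
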